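/- arXiv:2310.02864 — 3 statements merged into one kernel-verified Lean document; each statement's English description precedes it below -/
import Mathlib

section
/- Let T ≤ d and let X ∈ ℝ^{T×d} be a random matrix such that (i) each row of X has a rotationally invariant distribution over ℝ^d with absolutely continuous marginals and (ii) the rows of X are mutually independent. Then the orthogonal projection P_X onto the row span of X is uniformly distributed over the Grassmannian Gr(T, d). -/
open MeasureTheory ProbabilityTheory Matrix
open scoped Classical

/-- The product measurable structure on matrices. -/
instance matrixMeasurableSpace {m n : Type*} : MeasurableSpace (Matrix m n ℝ) :=
  inferInstanceAs (MeasurableSpace (m → n → ℝ))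

/-- The Moore–Penrose pseudoinverse of a real matrix, characterized by the four
Penrose conditions (which determine it uniquely). -/
noncomputable def pinv {m n : ℕ} (A : Matrix (Fin m) (Fin n) ℝ) : Matrix (Fin n) (Fin m) ℝ :=
  if h : ∃ B : Matrix (Fin n) (Fin m) ℝ,
      A * B * A = A ∧ B * A * B = B ∧ (A * B)ᵀ = A * B ∧ (B * A)ᵀ = B * A
  then h.choose else 0

/-- Spectral (ℓ²-operator) norm of a matrix. -/
noncomputable def opNorm {m n : ℕ} (A : Matrix (Fin m) (Fin n) ℝ) : ℝ :=
  sSup {c : ℝ | ∃ v : Fin n → ℝ, (∑ j, (v j) ^ 2) = 1 ∧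
    c = Real.sqrt (∑ i, (A.mulVec v i) ^ 2)}

/-- Squared Frobenius norm of a matrix. -/
noncomputable def frobSq {m n : ℕ} (A : Matrix (Fin m) (Fin n) ℝ) : ℝ :=
  ∑ i, ∑ j, (A i j) ^ 2

/-- A random vector is sub-Gaussian with variance proxy `σ2`:
`E[exp⟨α,Z⟩] ≤ exp(σ2 ‖α‖² / 2)` for all `α`. -/
def IsSubGaussianVec {Ω : Type*} [MeasurableSpace Ω] (μ : Measure Ω) {k : ℕ}
    (Z : Ω → Fin k → ℝ) (σ2 : ℝ) : Prop :=
  ∀ α : Fin k → ℝ,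
    ∫ ω, Real.exp (∑ i, α i * Z ω i) ∂μ ≤ Real.exp (σ2 * (∑ i, (α i) ^ 2) / 2)

/-- A random vector is centered. -/
def IsCenteredVec {Ω : Type*} [MeasurableSpace Ω] (μ : Measure Ω) {k : ℕ}
    (Z : Ω → Fin k → ℝ) : Prop :=
  ∀ i, ∫ ω, Z ω i ∂μ = 0

/-- A random vector has covariance `σ2 • I` (isotropic). -/
def IsIsotropicVec {Ω : Type*} [MeasurableSpace Ω] (μ : Measure Ω) {k : ℕ}
    (Z : Ω → Fin k → ℝ) (σ2 : ℝ) : Prop :=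
  ∀ i j, ∫ ω, Z ω i * Z ω j ∂μ = if i = j then σ2 else 0

/-- A random vector has a rotationally invariant distribution:
`Q u ≍ u` for every orthogonal `Q`. -/
def RotInvariant {Ω : Type*} [MeasurableSpace Ω] (μ : Measure Ω) {d : ℕ}
    (u : Ω → Fin d → ℝ) : Prop :=
  ∀ Q : Matrix (Fin d) (Fin d) ℝ, Qᵀ * Q = 1 →
    Measure.map (fun ω => Q.mulVec (u ω)) μ = Measure.map u μ

/-- `P` is an orthogonal projection of rank `k` (a point of the Grassmannian `Gr(k,d)`). -/
def IsOrthProj {d : ℕ} (P : Matrix (Fin d) (Fin d) ℝ) (k : ℕ) : Prop :=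
  Pᵀ = P ∧ P * P = P ∧ P.trace = (k : ℝ)

/-- A random matrix is uniformly distributed over the Grassmannian `Gr(k,d)`:
it is a.s. a rank-`k` orthogonal projection and `QᵀPQ ≍ P` for every orthogonal `Q`. -/
def UniformOnGrassmannian {Ω : Type*} [MeasurableSpace Ω] (μ : Measure Ω) {d : ℕ}
    (P : Ω → Matrix (Fin d) (Fin d) ℝ) (k : ℕ) : Prop :=
  (∀ᵐ ω ∂μ, IsOrthProj (P ω) k) ∧
  ∀ Q : Matrix (Fin d) (Fin d) ℝ, Qᵀ * Q = 1 →
    Measure.map (fun ω => Qᵀ * P ω * Q) μ = Measure.map P μ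

/-- Law of a `T × d` matrix with i.i.d. standard normal entries. -/
noncomputable def stdGaussianMatrix (T d : ℕ) : Measure (Matrix (Fin T) (Fin d) ℝ) :=
  Measure.pi fun _ : Fin T => Measure.pi fun _ : Fin d => gaussianReal 0 1

/-!
Almost surely the rows of `X` are linearly independent: a rotation-invariant law whose coordinates
are absolutely continuous charges no proper subspace (rotate a normal vector of the subspace onto a
coordinate axis), and adding the independent rows one at a time, Fubini's theorem shows that each
new row a.s. avoids the span of the previous ones. Then `X Xᵀ` is invertible and
`X⁺X = Xᵀ (X Xᵀ)⁻¹ X`, a rank-`T` orthogonal projection which satisfies `P_{XQ} = Qᵀ P_X Q` for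
orthogonal `Q`. Independence and rotation invariance of the rows make the law of `X` invariant under
`X ↦ X Q`, so the law of `P_X` is invariant under conjugation by `Q`.
-/

section MoorePenrose

variable {R : Type*} [CommRing R] {m n : Type*} [Fintype m] [Fintype n]

def IsMoorePenroseInverse (A : Matrix m n R) (B : Matrix n m R) : Prop :=
  A * B * A = A ∧ B * A * B = B ∧ (A * B)ᵀ = A * B ∧ (B * A)ᵀ = B * A

theorem IsMoorePenroseInverse.unique {A : Matrix m n R} {B₁ B₂ : Matrix n m R}
    (h₁ : IsMoorePenroseInverse A B₁) (h₂ : IsMoorePenroseInverse A B₂) : B₁ = B₂ := by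
  obtain ⟨a₁, b₁, c₁, d₁⟩ := h₁
  obtain ⟨a₂, b₂, c₂, d₂⟩ := h₂
  have hAB : A * B₁ = A * B₂ :=
    calc A * B₁ = A * B₂ * A * B₁ := by rw [a₂]
      _ = (A * B₂)ᵀ * (A * B₁)ᵀ := by rw [c₁, c₂, Matrix.mul_assoc]
      _ = (A * B₁ * A * B₂)ᵀ := by rw [← transpose_mul, Matrix.mul_assoc (A * B₁)]
      _ = A * B₂ := by rw [a₁, c₂]
  have hBA : B₁ * A = B₂ * A :=
    calc B₁ * A = B₁ * (A * B₂ * A) := by rw [a₂]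
      _ = (B₁ * A)ᵀ * (B₂ * A)ᵀ := by rw [d₁, d₂]; simp only [Matrix.mul_assoc]
      _ = (B₂ * (A * B₁ * A))ᵀ := by rw [← transpose_mul]; simp only [Matrix.mul_assoc]
      _ = B₂ * A := by rw [a₁, d₂]
  calc B₁ = B₁ * A * B₁ := b₁.symm
    _ = B₂ * A * B₂ := by rw [hBA, Matrix.mul_assoc, hAB, ← Matrix.mul_assoc]
    _ = B₂ := b₂

variable [DecidableEq m]

/-- The orthogonal projection onto the row span of `A` when the rows of `A` are linearly
independent (otherwise `(A * Aᵀ)⁻¹` is a junk value). -/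
noncomputable def rowSpanProj (A : Matrix m n R) : Matrix n n R :=
  Aᵀ * (A * Aᵀ)⁻¹ * A

theorem isMoorePenroseInverse_transpose_mul_inv {A : Matrix m n R}
    (hA : IsUnit (A * Aᵀ).det) : IsMoorePenroseInverse A (Aᵀ * (A * Aᵀ)⁻¹) := by
  have hright : A * (Aᵀ * (A * Aᵀ)⁻¹) = 1 := by
    rw [← Matrix.mul_assoc, Matrix.mul_nonsing_inv _ hA]
  have hsymm : ((A * Aᵀ)⁻¹)ᵀ = (A * Aᵀ)⁻¹ := by
    rw [transpose_nonsing_inv, transpose_mul, transpose_transpose]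
  refine ⟨by rw [hright, Matrix.one_mul], by rw [Matrix.mul_assoc, hright, Matrix.mul_one],
    by rw [hright, transpose_one], ?_⟩
  rw [transpose_mul, transpose_mul, hsymm, transpose_transpose, Matrix.mul_assoc]

theorem isOrthProj_rowSpanProj {k d : ℕ} {A : Matrix (Fin k) (Fin d) ℝ}
    (hA : IsUnit (A * Aᵀ).det) : IsOrthProj (rowSpanProj A) k := by
  obtain ⟨-, hidem, -, hsymm⟩ := isMoorePenroseInverse_transpose_mul_inv hA
  refine ⟨hsymm, ?_, ?_⟩
  · rw [rowSpanProj, ← Matrix.mul_assoc, hidem]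
  · rw [rowSpanProj, trace_mul_comm, ← Matrix.mul_assoc, Matrix.mul_nonsing_inv _ hA,
      trace_one, Fintype.card_fin]

theorem rowSpanProj_mul_orthogonal [DecidableEq n] {A : Matrix m n R} {Q : Matrix n n R}
    (hQ : Q * Qᵀ = 1) : rowSpanProj (A * Q) = Qᵀ * rowSpanProj A * Q := by
  have hgram : A * Q * (A * Q)ᵀ = A * Aᵀ := by
    rw [transpose_mul, Matrix.mul_assoc, ← Matrix.mul_assoc Q, hQ, Matrix.one_mul]
  rw [rowSpanProj, rowSpanProj, hgram]
  simp only [transpose_mul, Matrix.mul_assoc]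

theorem isUnit_det_mul_transpose_of_linearIndependent {K : Type*} [Field K] [LinearOrder K]
    [IsStrictOrderedRing K] {A : Matrix m n K} (hA : LinearIndependent K A.row) :
    IsUnit (A * Aᵀ).det := by
  refine isUnit_iff_ne_zero.mpr fun hdet => ?_
  obtain ⟨c, hc, hcGram⟩ := exists_vecMul_eq_zero_iff.mpr hdet
  have hcA : c ᵥ* A = 0 := by
    have : (c ᵥ* A) ⬝ᵥ (c ᵥ* A) = 0 := by
      rw [← dotProduct_mulVec, ← vecMul_transpose, vecMul_vecMul, hcGram, dotProduct_zero]
    exact dotProduct_self_eq_zero.mp this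
  refine hc (funext (Fintype.linearIndependent_iff.mp hA c ?_))
  rw [← hcA]
  exact (vecMul_eq_sum c A).symm

end MoorePenrose

theorem pinv_eq_of_isMoorePenroseInverse {k d : ℕ} {A : Matrix (Fin k) (Fin d) ℝ}
    {B : Matrix (Fin d) (Fin k) ℝ} (hB : IsMoorePenroseInverse A B) : pinv A = B := by
  unfold pinv
  split_ifs with hex
  · exact IsMoorePenroseInverse.unique hex.choose_spec hB
  · exact absurd ⟨B, hB⟩ hex

theorem pinv_mul_self_eq_rowSpanProj {k d : ℕ} {A : Matrix (Fin k) (Fin d) ℝ}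
    (hA : IsUnit (A * Aᵀ).det) : pinv A * A = rowSpanProj A := by
  rw [pinv_eq_of_isMoorePenroseInverse (isMoorePenroseInverse_transpose_mul_inv hA), rowSpanProj]

instance matrixBorelSpace {m n : Type*} [Fintype m] [Fintype n] :
    BorelSpace (Matrix m n ℝ) :=
  inferInstanceAs (BorelSpace (m → n → ℝ))

instance matrixSecondCountableTopology {m n : Type*} [Fintype m] [Fintype n] :
    SecondCountableTopology (Matrix m n ℝ) :=
  inferInstanceAs (SecondCountableTopology (m → n → ℝ))

section Measurability

variable {α : Type*} [MeasurableSpace α] {l m n : Type*} [Fintype l] [Fintype m] [Fintype n]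

theorem Measurable.matrix_mul {f : α → Matrix l m ℝ} {g : α → Matrix m n ℝ}
    (hf : Measurable f) (hg : Measurable g) : Measurable fun x => f x * g x :=
  (continuous_fst.matrix_mul continuous_snd).measurable2 hf hg

theorem measurable_mulVec (Q : Matrix m n ℝ) : Measurable fun u : n → ℝ => Q *ᵥ u :=
  (continuous_const.matrix_mulVec continuous_id).measurable

theorem Measurable.matrix_inv [DecidableEq n] {f : α → Matrix n n ℝ} (hf : Measurable f) :
    Measurable fun x => (f x)⁻¹ := by
  simp_rw [inv_def, Ring.inverse_eq_inv']
  exact (measurable_inv.comp (continuous_id.matrix_det.measurable.comp hf)).smul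
    (continuous_id.matrix_adjugate.measurable.comp hf)

theorem measurable_rowSpanProj [DecidableEq m] :
    Measurable fun A : Matrix m n ℝ => rowSpanProj A :=
  ((continuous_id.matrix_transpose.measurable.matrix_mul
    (measurable_id.matrix_mul continuous_id.matrix_transpose.measurable).matrix_inv).matrix_mul
    measurable_id)

end Measurability

theorem exists_orthogonal_row_eq {d : ℕ} (j : Fin d) (w : EuclideanSpace ℝ (Fin d))
    (hw : ‖w‖ = 1) : ∃ Q : Matrix (Fin d) (Fin d) ℝ, Qᵀ * Q = 1 ∧ Q j = w.ofLp := by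
  have hone : Orthonormal ℝ (({j} : Set (Fin d)).domRestrict fun _ => w) := by
    rw [orthonormal_iff_ite]
    rintro ⟨i, rfl⟩ ⟨i', rfl⟩
    simp [Set.domRestrict, hw]
  obtain ⟨b, hb⟩ := hone.exists_orthonormalBasis_extension_of_card_eq (by simp)
  refine ⟨((EuclideanSpace.basisFun (Fin d) ℝ).toBasis.toMatrix b)ᵀ, ?_, ?_⟩
  · rw [transpose_transpose, ← mem_orthogonalGroup_iff]
    exact OrthonormalBasis.toMatrix_orthonormalBasis_mem_orthogonal _ _
  · ext i
    simp [Module.Basis.toMatrix_apply, hb j rfl]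

theorem Submodule.exists_dotProduct_eq_zero_of_ne_top {d : ℕ} {W : Submodule ℝ (Fin d → ℝ)}
    (hW : W ≠ ⊤) : ∃ v : Fin d → ℝ, v ≠ 0 ∧ ∀ u ∈ W, v ⬝ᵥ u = 0 := by
  obtain ⟨f, hf, hWf⟩ := W.exists_le_ker_of_lt_top (lt_top_iff_ne_top.mpr hW)
  have hfv : ∀ u, f u = (fun i => f (Pi.single i 1)) ⬝ᵥ u := fun u => by
    rw [LinearMap.pi_apply_eq_sum_univ f u, dotProduct_comm]
    refine Finset.sum_congr rfl fun i _ => ?_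
    rw [smul_eq_mul]
    congr 2
    ext j
    simp [Pi.single_apply, eq_comm]
  refine ⟨fun i => f (Pi.single i 1), fun hv => hf (LinearMap.ext fun u => ?_),
    fun u hu => (hfv u).symm.trans (hWf hu)⟩
  rw [hfv, hv, zero_dotProduct, LinearMap.zero_apply]

theorem RotInvariant.map_mulVec {Ω : Type*} [MeasurableSpace Ω] {μ : Measure Ω} {d : ℕ}
    {u : Ω → Fin d → ℝ} (h : RotInvariant μ u) (hu : Measurable u) {Q : Matrix (Fin d) (Fin d) ℝ}
    (hQ : Qᵀ * Q = 1) : (μ.map u).map (fun v => Q *ᵥ v) = μ.map u := by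
  rw [Measure.map_map (measurable_mulVec Q) hu]
  exact h Q hQ

theorem measure_submodule_eq_zero_of_rotation_invariant {d : ℕ} {ν : Measure (Fin d → ℝ)}
    (hrot : ∀ Q : Matrix (Fin d) (Fin d) ℝ, Qᵀ * Q = 1 → ν.map (fun u => Q *ᵥ u) = ν)
    (hac : ∀ j, ν.map (fun u => u j) ≪ volume) {W : Submodule ℝ (Fin d → ℝ)}
    (hW : W ≠ ⊤) : ν W = 0 := by
  obtain ⟨v, hv, hWv⟩ := W.exists_dotProduct_eq_zero_of_ne_top hW
  obtain ⟨j, -⟩ := Function.ne_iff.mp hv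
  set v' : EuclideanSpace ℝ (Fin d) := WithLp.toLp 2 v
  have hv' : v' ≠ 0 := fun h => hv (congrArg WithLp.ofLp h)
  obtain ⟨Q, hQ, hQj⟩ := exists_orthogonal_row_eq j (‖v'‖⁻¹ • v') (norm_smul_inv_norm hv')
  have hWQ : (W : Set (Fin d → ℝ)) ⊆ (fun u => Q *ᵥ u) ⁻¹' {u | u j = 0} := fun u hu => by
    change Q j ⬝ᵥ u = 0
    rw [hQj, WithLp.ofLp_smul, smul_dotProduct, hWv u hu, smul_zero]
  refine measure_mono_null hWQ ?_
  rw [← Measure.map_apply (measurable_mulVec Q)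
    (measurableSet_eq_fun (measurable_pi_apply j) measurable_const), hrot Q hQ]
  have := hac j (Real.volume_singleton (a := 0))
  rwa [Measure.map_apply (measurable_pi_apply j) (measurableSet_singleton 0)] at this

theorem ae_linearIndependent_pi {E : Type*} [NormedAddCommGroup E] [NormedSpace ℝ E]
    [FiniteDimensional ℝ E] [MeasurableSpace E] [BorelSpace E] :
    ∀ {n : ℕ}, n ≤ Module.finrank ℝ E → ∀ (ν : Fin n → Measure E) [∀ i, SigmaFinite (ν i)],
      (∀ i (W : Submodule ℝ E), W ≠ ⊤ → ν i W = 0) →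
      ∀ᵐ M ∂Measure.pi ν, LinearIndependent ℝ M
  | 0, _, _, _, _ => Filter.Eventually.of_forall fun _ => linearIndependent_empty_type
  | n + 1, hn, ν, _, hν => by
    have hsplit : MeasurePreserving (fun M : Fin (n + 1) → E => (Fin.init M, M (Fin.last n)))
        (Measure.pi ν) ((Measure.pi fun i => ν i.castSucc).prod (ν (Fin.last n))) := by
      convert Measure.measurePreserving_swap.comp
        (measurePreserving_piFinSuccAbove ν (Fin.last n)) using 1
      · funext M
        simp
      · simp
    have hmeas : MeasurableSet
        {p : (Fin n → E) × E | LinearIndependent ℝ (Fin.snoc p.1 p.2 : Fin (n + 1) → E)} :=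
      (isOpen_setOfPred_linearIndependent.preimage
        (continuous_fst.finSnoc continuous_snd)).measurableSet
    have hsnoc : ∀ᵐ p ∂(Measure.pi fun i => ν i.castSucc).prod (ν (Fin.last n)),
        LinearIndependent ℝ (Fin.snoc p.1 p.2 : Fin (n + 1) → E) := by
      rw [Measure.ae_prod_iff_ae_ae hmeas]
      filter_upwards [ae_linearIndependent_pi (by omega) _ fun i => hν i.castSucc] with v hv
      have hspan : Submodule.span ℝ (Set.range v) ≠ ⊤ := fun htop => by
        have := finrank_range_le_card (R := ℝ) v
        rw [Set.finrank, htop, finrank_top, Fintype.card_fin] at this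
        omega
      refine measure_mono_null (fun x hx => ?_) (hν _ _ hspan)
      exact not_not.mp fun h => hx (linearIndependent_finSnoc.mpr ⟨hv, h⟩)
    filter_upwards [hsplit.quasiMeasurePreserving.ae hsnoc] with M hM
    rwa [Fin.snoc_init_self] at hM

theorem map_mul_orthogonal_pi {T d : ℕ} (ν : Fin T → Measure (Fin d → ℝ))
    [∀ i, SigmaFinite (ν i)]
    (hrot : ∀ i, ∀ Q : Matrix (Fin d) (Fin d) ℝ, Qᵀ * Q = 1 → (ν i).map (fun u => Q *ᵥ u) = ν i)
    {Q : Matrix (Fin d) (Fin d) ℝ} (hQ : Q * Qᵀ = 1) :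
    (Measure.pi ν).map (fun A : Matrix (Fin T) (Fin d) ℝ => A * Q) = Measure.pi ν := by
  have hrows : (fun A : Matrix (Fin T) (Fin d) ℝ => A * Q) = fun A i => Qᵀ *ᵥ A i := by
    funext A i j
    simp [mul_apply, mulVec, dotProduct, mul_comm]
  have hQT : Qᵀᵀ * Qᵀ = 1 := by rw [transpose_transpose, hQ]
  rw [hrows]
  exact (measurePreserving_pi ν ν fun i =>
    ⟨measurable_mulVec Qᵀ, hrot i Qᵀ hQT⟩).map_eq

theorem map_conj_rowSpanProj {m n : Type*} [Fintype m] [Fintype n] [DecidableEq m]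
    [DecidableEq n]
    {ρ : Measure (Matrix m n ℝ)} {Q : Matrix n n ℝ} (hQ : Q * Qᵀ = 1)
    (hρ : ρ.map (fun A => A * Q) = ρ) :
    ρ.map (fun A => Qᵀ * rowSpanProj A * Q) = ρ.map rowSpanProj := by
  have hmul : Measurable fun A : Matrix m n ℝ => A * Q :=
    measurable_id.matrix_mul measurable_const
  calc ρ.map (fun A => Qᵀ * rowSpanProj A * Q) = ρ.map (rowSpanProj ∘ fun A => A * Q) := by
        simp_rw [Function.comp_def, rowSpanProj_mul_orthogonal hQ]
    _ = (ρ.map fun A => A * Q).map rowSpanProj := (Measure.map_map measurable_rowSpanProj hmul).symm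
    _ = ρ.map rowSpanProj := by rw [hρ]

theorem uniformOnGrassmannian_pinv_mul_self {Ω : Type*} [MeasurableSpace Ω] {μ : Measure Ω}
    {T d : ℕ} {X : Ω → Matrix (Fin T) (Fin d) ℝ} (hXm : Measurable X)
    (hgram : ∀ᵐ ω ∂μ, IsUnit (X ω * (X ω)ᵀ).det)
    (hinv : ∀ Q : Matrix (Fin d) (Fin d) ℝ, Q * Qᵀ = 1 →
      (μ.map X).map (fun A => A * Q) = μ.map X) :
    UniformOnGrassmannian μ (fun ω => pinv (X ω) * X ω) T := by
  have hP : ∀ᵐ ω ∂μ, pinv (X ω) * X ω = rowSpanProj (X ω) :=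
    hgram.mono fun ω => pinv_mul_self_eq_rowSpanProj
  refine ⟨hgram.mono fun ω h => by
    simpa only [pinv_mul_self_eq_rowSpanProj h] using isOrthProj_rowSpanProj h, fun Q hQ => ?_⟩
  have hconj : Measurable fun A : Matrix (Fin T) (Fin d) ℝ => Qᵀ * rowSpanProj A * Q :=
    (measurable_const.matrix_mul measurable_rowSpanProj).matrix_mul measurable_const
  have hQ' : Q * Qᵀ = 1 := mul_eq_one_comm.mp hQ
  calc μ.map (fun ω => Qᵀ * (pinv (X ω) * X ω) * Q)
      = (μ.map X).map (fun A => Qᵀ * rowSpanProj A * Q) :=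
        (Measure.map_congr (hP.mono fun ω h => by simp only [h, Function.comp_apply])).trans
          (Measure.map_map hconj hXm).symm
    _ = (μ.map X).map rowSpanProj := map_conj_rowSpanProj hQ' (hinv Q hQ')
    _ = μ.map (fun ω => pinv (X ω) * X ω) :=
        (Measure.map_map measurable_rowSpanProj hXm).trans (Measure.map_congr hP).symm

/-- If `T ≤ d` and the rows of the random matrix `X ∈ ℝ^{T×d}` are mutually
independent, each with a rotationally invariant distribution with absolutely continuous
marginals, then the orthogonal projection `P_X = X⁺X` onto the row span of `X` is uniformly
distributed over the Grassmannian `Gr(T, d)`. -/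
theorem stmt_1 {Ω : Type} [MeasurableSpace Ω] (μ : Measure Ω) [IsProbabilityMeasure μ]
    (T d : ℕ) (hTd : T ≤ d)
    (X : Ω → Matrix (Fin T) (Fin d) ℝ) (hXm : Measurable X)
    (hrot : ∀ i : Fin T, RotInvariant μ (fun ω => X ω i))
    (hac : ∀ (i : Fin T) (j : Fin d),
      Measure.map (fun ω => X ω i j) μ ≪ (volume : Measure ℝ))
    (hindep : iIndepFun (fun i ω => X ω i) μ) :
    UniformOnGrassmannian μ (fun ω => pinv (X ω) * X ω) T := by
  have hrow : ∀ i, Measurable fun ω => X ω i := fun i => (measurable_pi_apply i).comp hXm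
  set ν := fun i => μ.map fun ω => X ω i
  have hlaw : μ.map X = Measure.pi ν :=
    (iIndepFun_iff_map_fun_eq_pi_map fun i => (hrow i).aemeasurable).mp hindep
  have hνrot : ∀ i, ∀ Q : Matrix (Fin d) (Fin d) ℝ, Qᵀ * Q = 1 →
      (ν i).map (fun u => Q *ᵥ u) = ν i := fun i _ => (hrot i).map_mulVec (hrow i)
  have hνac : ∀ i j, (ν i).map (fun u => u j) ≪ volume := fun i j => by
    dsimp only [ν]
    rw [Measure.map_map (measurable_pi_apply j) (hrow i)]
    exact hac i j
  refine uniformOnGrassmannian_pinv_mul_self hXm ?_ fun Q hQ => by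
    rw [hlaw]
    exact map_mul_orthogonal_pi ν hνrot hQ
  have hrows : ∀ᵐ A ∂μ.map X, LinearIndependent ℝ A.row := by
    rw [hlaw]
    exact ae_linearIndependent_pi (by rwa [Module.finrank_fin_fun]) ν fun i _ =>
      measure_submodule_eq_zero_of_rotation_invariant (hνrot i) (hνac i)
  exact (ae_of_ae_map hXm.aemeasurable hrows).mono fun ω =>
    isUnit_det_mul_transpose_of_linearIndependent
end

section
/- Let d ≥ 2, T ≤ d, and let P be a random matrix uniformly distributed over the Grassmannian Gr(T, d) (identified with rank-T orthogonal projections in ℝ^{d×d}). Then for every fixed rank-r orthogonal projection P₀ ∈ Gr(r, d), E[P P₀ P] = [ (T²d + T(d−2)) / ((d−1)d(d+2)) ] · P₀ + [ rT(d−T) / ((d−1)d(d+2)) ] · I_d. Moreover, if d = 1 then E[P P₀ P] = T·P₀. -/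
open MeasureTheory ProbabilityTheory Matrix
open scoped Classical

/-!
Put `F i j k l = E[P i j * P k l]`. Conjugation invariance of the law of `P` makes `F` an
isotropic 4-tensor, so `F = α δᵢⱼδₖₗ + β δᵢₖδⱼₗ + γ δᵢₗδⱼₖ`: diagonal sign changes kill every
entry in which some index value occurs an odd number of times, permutations identify the
remaining entries of each pattern, and a single plane reflection gives `F mmmm = F mmnn +
F mnmn + F mnnm`. Contracting with `P₀` gives `E[P P₀ P] = (α + β) P₀ + γ r I`, and the
constants are pinned down by `E[(tr P)²] = T²`, `E[tr P²] = E[tr P] = T` and, for `d ≥ 2`,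
by `β = γ`, which comes from `Pᵀ = P`.
-/

noncomputable def householder {K n : Type*} [Field K] [Fintype n] [DecidableEq n] (u : n → K) :
    Matrix n n K :=
  1 - (2 / (u ⬝ᵥ u)) • vecMulVec u u

theorem householder_transpose_mul_self {K n : Type*} [Field K] [Fintype n] [DecidableEq n]
    {u : n → K} (hu : u ⬝ᵥ u ≠ 0) : (householder u)ᵀ * householder u = 1 := by
  have hsq : vecMulVec u u * vecMulVec u u = (u ⬝ᵥ u) • vecMulVec u u := by
    rw [vecMulVec_mul_vecMulVec, vecMulVec_smul]
  simp only [householder, transpose_sub, transpose_one, transpose_smul, transpose_vecMulVec,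
    sub_mul, mul_sub, one_mul, mul_one, hsq, smul_smul, mul_smul_comm, smul_mul_assoc]
  rw [div_mul_cancel₀ (2 : K) hu]
  module

theorem transpose_mul_mul_apply {n R : Type*} [Fintype n] [CommSemiring R]
    (Q M : Matrix n n R) (i j : n) :
    (Qᵀ * M * Q) i j = ∑ a, ∑ b, Q a i * M a b * Q b j := by
  simp only [mul_apply, transpose_apply, Finset.sum_mul]
  exact Finset.sum_comm

theorem IsOrthProj.apply_comm {d k : ℕ} {P : Matrix (Fin d) (Fin d) ℝ} (hP : IsOrthProj P k)
    (i j : Fin d) : P i j = P j i := by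
  conv_lhs => rw [← hP.1, transpose_apply]

theorem IsOrthProj.abs_apply_le_one {d k : ℕ} {P : Matrix (Fin d) (Fin d) ℝ}
    (hP : IsOrthProj P k) (i j : Fin d) : |P i j| ≤ 1 := by
  have hdiag : ∀ i, P i i = ∑ x, P i x ^ 2 := fun i => by
    conv_lhs => rw [← hP.2.1, mul_apply]
    simp only [hP.apply_comm _ i, sq]
  have hsq : ∀ j, P i j ^ 2 ≤ P i i := fun j => by
    rw [hdiag i]
    exact Finset.single_le_sum (fun x _ => sq_nonneg (P i x)) (Finset.mem_univ j)
  have hii : P i i ≤ 1 := by nlinarith [hsq i]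
  rw [← sq_le_one_iff_abs_le_one]
  exact (hsq j).trans hii

def IsIsotropicTensor {d : ℕ} (F : Fin d → Fin d → Fin d → Fin d → ℝ) : Prop :=
  ∀ Q : Matrix (Fin d) (Fin d) ℝ, Qᵀ * Q = 1 → ∀ i j k l,
    ∑ a, ∑ b, ∑ c, ∑ e, Q a i * Q b j * Q c k * Q e l * F a b c e = F i j k l

def deltaTensor {d : ℕ} (α β γ : ℝ) (i j k l : Fin d) : ℝ :=
  α * (if i = j then 1 else 0) * (if k = l then 1 else 0)
    + β * (if i = k then 1 else 0) * (if j = l then 1 else 0)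
    + γ * (if i = l then 1 else 0) * (if j = k then 1 else 0)

namespace IsIsotropicTensor

variable {d : ℕ} {F : Fin d → Fin d → Fin d → Fin d → ℝ}

theorem apply_perm (hF : IsIsotropicTensor F) (σ : Equiv.Perm (Fin d)) (i j k l : Fin d) :
    F (σ i) (σ j) (σ k) (σ l) = F i j k l := by
  have hQ : (σ⁻¹.permMatrix ℝ)ᵀ * σ⁻¹.permMatrix ℝ = 1 := by
    rw [transpose_permMatrix, ← permMatrix_mul, mul_inv_cancel, permMatrix_one]
  simpa [PEquiv.toMatrix_apply, Equiv.toPEquiv_apply, ite_mul, Equiv.Perm.inv_def,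
    Equiv.symm_apply_eq] using hF _ hQ i j k l

theorem sign_mul_apply (hF : IsIsotropicTensor F) {w : Fin d → ℝ} (hw : ∀ x, w x * w x = 1)
    (i j k l : Fin d) : w i * w j * w k * w l * F i j k l = F i j k l := by
  have hQ : (diagonal w)ᵀ * diagonal w = 1 := by
    rw [diagonal_transpose, diagonal_mul_diagonal, ← diagonal_one]
    exact congrArg diagonal (funext hw)
  simpa [diagonal_apply, ite_mul] using hF _ hQ i j k l

theorem apply_eq_zero_of_sign (hF : IsIsotropicTensor F) (m : Fin d) {i j k l : Fin d}
    (h : ((if i = m then -1 else 1) * (if j = m then -1 else 1) * (if k = m then -1 else 1) *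
      (if l = m then -1 else 1) : ℝ) = -1) : F i j k l = 0 := by
  have := hF.sign_mul_apply (w := fun x => if x = m then -1 else 1)
    (fun x => by split_ifs <;> norm_num) i j k l
  rw [h] at this
  linarith

theorem apply_diag (hF : IsIsotropicTensor F) {m n : Fin d} (hmn : m ≠ n) :
    F m m m m = F m m n n + F m n m n + F m n n m := by
  set u : Fin d → ℝ := Pi.single m 1 + Pi.single n 2
  have hu : u ⬝ᵥ u = 5 := by
    simp only [u, dotProduct, Pi.add_apply, Pi.single_apply, mul_add, mul_ite, mul_one, mul_zero,
      add_mul, ite_mul, one_mul, zero_mul, Finset.sum_add_distrib, Finset.sum_ite_eq',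
      Finset.mem_univ, if_true, hmn, Ne.symm hmn, if_false, add_zero, zero_add]
    norm_num
  have hcol : ∀ a, householder u a m =
      3 / 5 * (if a = m then 1 else 0) - 4 / 5 * (if a = n then 1 else 0) := by
    intro a
    by_cases ham : a = m <;> by_cases han : a = n <;>
      simp_all [householder, u, one_apply, vecMulVec_apply] <;> norm_num
  have key := hF _ (householder_transpose_mul_self (by rw [hu]; norm_num)) m m m m
  simp only [hcol, sub_mul, mul_sub, mul_assoc, Finset.sum_sub_distrib, ite_mul, one_mul,
    zero_mul, mul_ite, mul_zero, Finset.sum_ite_eq', Finset.mem_univ, if_true] at key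
  have hswap := fun i j k l => hF.apply_perm (Equiv.swap m n) i j k l
  have e1 := hswap m m m m
  have e2 := hswap m m n n
  have e3 := hswap m n m n
  have e4 := hswap m n n m
  simp only [Equiv.swap_apply_left, Equiv.swap_apply_right] at e1 e2 e3 e4
  obtain ⟨z1, z2, z3, z4, z5, z6, z7, z8⟩ :
      F n m m m = 0 ∧ F m n m m = 0 ∧ F m m n m = 0 ∧ F m m m n = 0 ∧
      F m n n n = 0 ∧ F n m n n = 0 ∧ F n n m n = 0 ∧ F n n n m = 0 := by
    refine ⟨?_, ?_, ?_, ?_, ?_, ?_, ?_, ?_⟩ <;> exact hF.apply_eq_zero_of_sign n (by simp [hmn])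
  rw [e1, e2, e3, e4, z1, z2, z3, z4, z5, z6, z7, z8] at key
  linarith

theorem exists_eq_deltaTensor (hF : IsIsotropicTensor F) :
    ∃ α β γ : ℝ, F = deltaTensor α β γ := by
  rcases lt_or_ge d 2 with hd | hd
  · have : Subsingleton (Fin d) := Fin.subsingleton_iff_le_one.2 (by omega)
    refine ⟨∑ i, F i i i i, 0, 0, ?_⟩
    funext i j k l
    rw [Fintype.sum_subsingleton _ l]
    obtain ⟨rfl, rfl, rfl⟩ : i = l ∧ j = l ∧ k = l :=
      ⟨Subsingleton.elim _ _, Subsingleton.elim _ _, Subsingleton.elim _ _⟩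
    simp [deltaTensor]
  set m : Fin d := ⟨0, by omega⟩
  set n : Fin d := ⟨1, hd⟩
  have hmn : m ≠ n := by simp [m, n, Fin.ext_iff]
  refine ⟨F m m n n, F m n m n, F m n n m, ?_⟩
  funext i j k l
  have hpair : ∀ {i k : Fin d}, i ≠ k →
      F i i k k = F m m n n ∧ F i k i k = F m n m n ∧ F i k k i = F m n n m := by
    intro i k hik
    obtain ⟨σ, hσ⟩ := Equiv.Perm.exists_extending_pair ![m, n] ![i, k]
      (injective_pair_iff_ne.2 hmn) (injective_pair_iff_ne.2 hik)
    obtain ⟨rfl, rfl⟩ : σ m = i ∧ σ n = k := ⟨hσ 0, hσ 1⟩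
    exact ⟨hF.apply_perm σ _ _ _ _, hF.apply_perm σ _ _ _ _, hF.apply_perm σ _ _ _ _⟩
  have hdiag : ∀ i, F i i i i = F m m n n + F m n m n + F m n n m := by
    intro i
    rw [← hF.apply_diag hmn, ← hF.apply_perm (Equiv.swap m i)]
    simp
  by_cases hij : i = j
  · subst hij
    by_cases hkl : k = l
    · subst hkl
      by_cases hik : i = k
      · subst hik
        simp [deltaTensor, hdiag]
      · simp [deltaTensor, hik, (hpair hik).1]
    · by_cases hik : i = k
      · subst hik
        rw [hF.apply_eq_zero_of_sign l (by simp [hkl])]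
        simp [deltaTensor, hkl]
      · rw [hF.apply_eq_zero_of_sign k (by simp [Ne.symm hkl, hik])]
        simp [deltaTensor, hkl, hik]
  · by_cases hik : i = k
    · subst hik
      by_cases hjl : j = l
      · subst hjl
        simp [deltaTensor, hij, Ne.symm hij, (hpair hij).2.1]
      · rw [hF.apply_eq_zero_of_sign j (by simp [hij, Ne.symm hjl])]
        simp [deltaTensor, hij, Ne.symm hij, hjl]
    · by_cases hil : i = l
      · subst hil
        by_cases hjk : j = k
        · subst hjk
          simp [deltaTensor, hij, Ne.symm hij, (hpair hij).2.2]
        · rw [hF.apply_eq_zero_of_sign j (by simp [hij, Ne.symm hjk])]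
          simp [deltaTensor, hij, hik, hjk]
      · rw [hF.apply_eq_zero_of_sign i (by simp [Ne.symm hij, Ne.symm hik, Ne.symm hil])]
        simp [deltaTensor, hij, hik, hil]

end IsIsotropicTensor

section DeltaTensor

variable {d : ℕ} (α β γ : ℝ)

theorem sum_sum_mul_deltaTensor (M : Matrix (Fin d) (Fin d) ℝ) (i l : Fin d) :
    ∑ j, ∑ k, M j k * deltaTensor α β γ i j k l =
      α * M i l + β * M l i + γ * M.trace * (if i = l then 1 else 0) := by
  simp only [deltaTensor, mul_add, Finset.sum_add_distrib, mul_ite, mul_one, mul_zero,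
    Finset.sum_ite_eq, Finset.sum_ite_eq', Finset.mem_univ, if_true, trace, diag_apply]
  by_cases hil : i = l
  · subst hil
    simp [Finset.mul_sum, mul_comm]
  · simp only [Finset.sum_ite_irrel, Finset.sum_ite_eq, Finset.mem_univ, if_true,
      Finset.sum_const_zero, Finset.sum_ite_eq', hil, if_false, add_zero]
    ring

theorem sum_sum_deltaTensor_diag :
    ∑ i : Fin d, ∑ k, deltaTensor α β γ i i k k = α * d ^ 2 + (β + γ) * d := by
  simp only [deltaTensor, if_true, mul_one, mul_ite, mul_zero, Finset.sum_add_distrib,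
    Finset.sum_const, Finset.card_univ, Fintype.card_fin, nsmul_eq_mul, Finset.sum_ite_eq,
    Finset.mem_univ]
  ring

theorem sum_sum_deltaTensor_trace :
    ∑ i : Fin d, ∑ k, deltaTensor α β γ i k k i = (α + β) * d + γ * d ^ 2 := by
  simp only [deltaTensor, mul_ite, mul_one, mul_zero, if_true, Finset.sum_add_distrib,
    Finset.sum_ite_eq', Finset.mem_univ, Finset.sum_const, Finset.card_univ, Fintype.card_fin,
    nsmul_eq_mul]
  ring

end DeltaTensor

theorem Measurable.transpose_mul_mul {Ω : Type*} [MeasurableSpace Ω] {d : ℕ}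
    {P : Ω → Matrix (Fin d) (Fin d) ℝ} (hPm : Measurable P) (Q : Matrix (Fin d) (Fin d) ℝ) :
    Measurable fun ω => Qᵀ * P ω * Q := by
  refine measurable_pi_lambda _ fun i => measurable_pi_lambda _ fun j => ?_
  simp only [transpose_mul_mul_apply]
  fun_prop

section SecondMoment

variable {Ω : Type*} [MeasurableSpace Ω] {μ : Measure Ω} {d : ℕ}
  {P : Ω → Matrix (Fin d) (Fin d) ℝ}

noncomputable def secondMoment (μ : Measure Ω) (P : Ω → Matrix (Fin d) (Fin d) ℝ)
    (i j k l : Fin d) : ℝ :=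
  ∫ ω, P ω i j * P ω k l ∂μ

theorem integral_sum_sum {ι κ : Type*} [Fintype ι] [Fintype κ] {f : ι → κ → Ω → ℝ}
    (hf : ∀ i k, Integrable (f i k) μ) :
    ∫ ω, ∑ i, ∑ k, f i k ω ∂μ = ∑ i, ∑ k, ∫ ω, f i k ω ∂μ := by
  rw [integral_finsetSum _ fun i _ => integrable_finsetSum _ fun k _ => hf i k]
  exact Finset.sum_congr rfl fun i _ => integral_finsetSum _ fun k _ => hf i k

theorem integrable_apply_mul_apply [IsFiniteMeasure μ] {T : ℕ} (hPm : Measurable P)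
    (hP : ∀ᵐ ω ∂μ, IsOrthProj (P ω) T) (i j k l : Fin d) :
    Integrable (fun ω => P ω i j * P ω k l) μ := by
  refine Integrable.of_bound (by fun_prop) 1 ?_
  filter_upwards [hP] with ω hω
  rw [norm_mul, ← one_mul (1 : ℝ)]
  exact mul_le_mul (hω.abs_apply_le_one i j) (hω.abs_apply_le_one k l) (norm_nonneg _) zero_le_one

theorem isIsotropicTensor_secondMoment (hPm : Measurable P)
    (hint : ∀ i j k l, Integrable (fun ω => P ω i j * P ω k l) μ)
    (hinv : ∀ Q : Matrix (Fin d) (Fin d) ℝ, Qᵀ * Q = 1 →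
      μ.map (fun ω => Qᵀ * P ω * Q) = μ.map P) :
    IsIsotropicTensor (secondMoment μ P) := by
  intro Q hQ i j k l
  have hexpand : ∀ ω, (Qᵀ * P ω * Q) i j * (Qᵀ * P ω * Q) k l =
      ∑ a, ∑ b, ∑ c, ∑ e, Q a i * Q b j * Q c k * Q e l * (P ω a b * P ω c e) := by
    intro ω
    rw [mul_comm]
    simp only [transpose_mul_mul_apply, Finset.sum_mul, Finset.mul_sum]
    exact Finset.sum_congr rfl fun a _ => Finset.sum_congr rfl fun b _ =>
      Finset.sum_congr rfl fun c _ => Finset.sum_congr rfl fun e _ => by ring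
  have hg : Measurable fun M : Matrix (Fin d) (Fin d) ℝ => M i j * M k l := by fun_prop
  calc ∑ a, ∑ b, ∑ c, ∑ e, Q a i * Q b j * Q c k * Q e l * secondMoment μ P a b c e
      = ∫ ω, (Qᵀ * P ω * Q) i j * (Qᵀ * P ω * Q) k l ∂μ := by
        simp only [hexpand, secondMoment]
        rw [integral_sum_sum fun a b =>
          integrable_finsetSum _ fun c _ => integrable_finsetSum _ fun e _ =>
            (hint a b c e).const_mul _]
        refine Finset.sum_congr rfl fun a _ => Finset.sum_congr rfl fun b _ => ?_
        rw [integral_sum_sum fun c e => (hint a b c e).const_mul _]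
        simp only [integral_const_mul]
    _ = ∫ M, M i j * M k l ∂(μ.map fun ω => Qᵀ * P ω * Q) :=
        (integral_map (hPm.transpose_mul_mul Q).aemeasurable hg.aestronglyMeasurable).symm
    _ = secondMoment μ P i j k l := by
        rw [hinv Q hQ, integral_map hPm.aemeasurable hg.aestronglyMeasurable, secondMoment]

theorem integral_mul_mul_apply (hint : ∀ i j k l, Integrable (fun ω => P ω i j * P ω k l) μ)
    (M : Matrix (Fin d) (Fin d) ℝ) (i l : Fin d) :
    ∫ ω, (P ω * M * P ω) i l ∂μ = ∑ j, ∑ k, M j k * secondMoment μ P i j k l := by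
  have hexpand : ∀ ω, (P ω * M * P ω) i l = ∑ j, ∑ k, M j k * (P ω i j * P ω k l) := by
    intro ω
    simp only [mul_apply, Finset.sum_mul]
    rw [Finset.sum_comm]
    exact Finset.sum_congr rfl fun j _ => Finset.sum_congr rfl fun k _ => by ring
  simp only [hexpand, secondMoment, ← integral_const_mul]
  exact integral_sum_sum fun j k => (hint i j k l).const_mul _

theorem secondMoment_comm_left {T : ℕ} (hP : ∀ᵐ ω ∂μ, IsOrthProj (P ω) T)
    (i j k l : Fin d) :
    secondMoment μ P i j k l = secondMoment μ P j i k l :=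
  integral_congr_ae <| by
    filter_upwards [hP] with ω hω
    rw [hω.apply_comm i j]

variable [IsProbabilityMeasure μ] {T : ℕ}

theorem sum_sum_secondMoment_diag (hPm : Measurable P)
    (hP : ∀ᵐ ω ∂μ, IsOrthProj (P ω) T) :
    ∑ i, ∑ k, secondMoment μ P i i k k = (T : ℝ) ^ 2 := by
  simp only [secondMoment]
  rw [← integral_sum_sum fun i k => integrable_apply_mul_apply hPm hP i i k k,
    integral_congr_ae (g := fun _ => (T : ℝ) ^ 2), integral_const, probReal_univ, one_smul]
  filter_upwards [hP] with ω hω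
  rw [← Finset.sum_mul_sum, ← sq]
  exact congrArg (· ^ 2) hω.2.2

theorem sum_sum_secondMoment_trace (hPm : Measurable P)
    (hP : ∀ᵐ ω ∂μ, IsOrthProj (P ω) T) :
    ∑ i, ∑ k, secondMoment μ P i k k i = T := by
  simp only [secondMoment]
  rw [← integral_sum_sum fun i k => integrable_apply_mul_apply hPm hP i k k i,
    integral_congr_ae (g := fun _ => (T : ℝ)), integral_const, probReal_univ, one_smul]
  filter_upwards [hP] with ω hω
  rw [← hω.2.2]
  conv_rhs => rw [← hω.2.1]
  rfl

theorem UniformOnGrassmannian.exists_secondMoment_eq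
    (hPm : Measurable P) (hP : UniformOnGrassmannian μ P T) :
    ∃ α β γ : ℝ, secondMoment μ P = deltaTensor α β γ ∧ α * d ^ 2 + (β + γ) * d = T ^ 2 ∧
      (α + β) * d + γ * d ^ 2 = T ∧ (2 ≤ d → β = γ) := by
  obtain ⟨α, β, γ, hF⟩ := (isIsotropicTensor_secondMoment hPm
    (integrable_apply_mul_apply hPm hP.1) hP.2).exists_eq_deltaTensor
  refine ⟨α, β, γ, hF, ?_, ?_, fun hd => ?_⟩
  · rw [← sum_sum_deltaTensor_diag, ← hF, sum_sum_secondMoment_diag hPm hP.1]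
  · rw [← sum_sum_deltaTensor_trace, ← hF, sum_sum_secondMoment_trace hPm hP.1]
  · set m : Fin d := ⟨0, by omega⟩
    set n : Fin d := ⟨1, hd⟩
    have hmn : m ≠ n := by simp [m, n, Fin.ext_iff]
    simpa [hF, deltaTensor, hmn, Ne.symm hmn] using secondMoment_comm_left hP.1 m n m n

end SecondMoment

theorem stmt_6_general {Ω : Type} [MeasurableSpace Ω] (μ : Measure Ω) [IsProbabilityMeasure μ]
    (T d r : ℕ)
    (P : Ω → Matrix (Fin d) (Fin d) ℝ) (hPm : Measurable P)
    (hP : UniformOnGrassmannian μ P T)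
    (P0 : Matrix (Fin d) (Fin d) ℝ) (hP0 : IsOrthProj P0 r) :
    (2 ≤ d → ∀ i j, ∫ ω, (P ω * P0 * P ω) i j ∂μ =
      (((T : ℝ) ^ 2 * d + T * ((d : ℝ) - 2)) / (((d : ℝ) - 1) * d * ((d : ℝ) + 2))) * P0 i j
        + (((r : ℝ) * T * ((d : ℝ) - T)) / (((d : ℝ) - 1) * d * ((d : ℝ) + 2)))
          * (if i = j then 1 else 0)) ∧
    (d = 1 → ∀ i j, ∫ ω, (P ω * P0 * P ω) i j ∂μ = (T : ℝ) * P0 i j) := by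
  obtain ⟨α, β, γ, hF, hdiag, htrace, hβγ⟩ := hP.exists_secondMoment_eq hPm
  have hmean : ∀ i l, ∫ ω, (P ω * P0 * P ω) i l ∂μ =
      (α + β) * P0 i l + γ * r * (if i = l then 1 else 0) := by
    intro i l
    rw [integral_mul_mul_apply (integrable_apply_mul_apply hPm hP.1), hF,
      sum_sum_mul_deltaTensor, hP0.apply_comm l i, hP0.2.2]
    ring
  refine ⟨fun hd i l => ?_, fun hd i l => ?_⟩
  · obtain rfl := hβγ hd
    have hD : ((d : ℝ) - 1) * d * ((d : ℝ) + 2) ≠ 0 := by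
      have hd2 : (2 : ℝ) ≤ d := by exact_mod_cast hd
      exact (mul_pos (mul_pos (by linarith) (by linarith)) (by linarith)).ne'
    have hcoef :
        ((T : ℝ) ^ 2 * d + T * ((d : ℝ) - 2)) / (((d : ℝ) - 1) * d * ((d : ℝ) + 2)) = α + β :=
      div_eq_of_eq_mul hD (by linear_combination -(d : ℝ) * hdiag - ((d : ℝ) - 2) * htrace)
    have hcoef' :
        ((r : ℝ) * T * ((d : ℝ) - T)) / (((d : ℝ) - 1) * d * ((d : ℝ) + 2)) = β * r :=
      div_eq_of_eq_mul hD (by linear_combination (r : ℝ) * (hdiag - (d : ℝ) * htrace))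
    rw [hmean, hcoef, hcoef']
  · subst hd
    obtain ⟨rfl, rfl⟩ : i = 0 ∧ l = 0 := ⟨Subsingleton.elim _ _, Subsingleton.elim _ _⟩
    have hr : (r : ℝ) = P0 0 0 := by simp [← hP0.2.2, trace]
    rw [hmean, hr, ← htrace, if_pos rfl, Nat.cast_one]
    ring

/-- Let `P` be uniformly distributed over `Gr(T, d)` and let `P₀` be a fixed
rank-`r` orthogonal projection. If `d ≥ 2` then
`E[P P₀ P] = ((T²d + T(d−2))/((d−1)d(d+2)))·P₀ + (rT(d−T)/((d−1)d(d+2)))·I_d`;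
moreover, if `d = 1` then `E[P P₀ P] = T·P₀`. -/
theorem stmt_6 {Ω : Type} [MeasurableSpace Ω] (μ : Measure Ω) [IsProbabilityMeasure μ]
    (T d r : ℕ) (hTd : T ≤ d)
    (P : Ω → Matrix (Fin d) (Fin d) ℝ) (hPm : Measurable P)
    (hP : UniformOnGrassmannian μ P T)
    (P0 : Matrix (Fin d) (Fin d) ℝ) (hP0 : IsOrthProj P0 r) :
    (2 ≤ d → ∀ i j, ∫ ω, (P ω * P0 * P ω) i j ∂μ =
      (((T : ℝ) ^ 2 * d + T * ((d : ℝ) - 2)) / (((d : ℝ) - 1) * d * ((d : ℝ) + 2))) * P0 i j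
        + (((r : ℝ) * T * ((d : ℝ) - T)) / (((d : ℝ) - 1) * d * ((d : ℝ) + 2)))
          * (if i = j then 1 else 0)) ∧
    (d = 1 → ∀ i j, ∫ ω, (P ω * P0 * P ω) i j ∂μ = (T : ℝ) * P0 i j) :=
  stmt_6_general μ T d r P hPm hP P0 hP0
end

section
/- Let d ≥ 2, T ≤ d, let V be uniformly distributed over the Stiefel manifold St(T, d) and set P = VVᵀ, a uniformly distributed rank-T orthogonal projection. Fix i ∈ [d] and let E_ii = e_i e_iᵀ. Then E[P E_ii P] = [ (T²d + T(d−2)) / ((d−1)d(d+2)) ] · E_ii + [ T(d−T) / ((d−1)d(d+2)) ] · I_d. In particular, E[(P E_ii P)_{ii}] = T(T+2)/(d(d+2)), E[(P E_ii P)_{jj}] = T(d−T)/((d−1)d(d+2)) for j ≠ i, and E[(P E_ii P)_{jk}] = 0 for j ≠ k. -/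
open MeasureTheory ProbabilityTheory Matrix
open scoped Classical

/-- A random `d × T` matrix is uniformly distributed over the Stiefel manifold `St(T, d)`:
its columns are a.s. orthonormal and `Q V ≍ V` for every orthogonal `Q ∈ O(d)`. -/
def UniformOnStiefel {Ω : Type*} [MeasurableSpace Ω] (μ : Measure Ω) {d T : ℕ}
    (V : Ω → Matrix (Fin d) (Fin T) ℝ) : Prop :=
  (∀ᵐ ω ∂μ, (V ω)ᵀ * V ω = 1) ∧
  ∀ Q : Matrix (Fin d) (Fin d) ℝ, Qᵀ * Q = 1 →
    Measure.map (fun ω => Q * V ω) μ = Measure.map V μ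


theorem sum_eq_add_mul_of_forall_ne {d : ℕ} {f : Fin d → ℝ} (i : Fin d) {c : ℝ}
    (hf : ∀ j, j ≠ i → f j = c) : ∑ j, f j = f i + ((d : ℝ) - 1) * c := by
  rw [← Finset.add_sum_erase _ _ (Finset.mem_univ i),
    Finset.sum_congr rfl fun j hj => hf j (Finset.ne_of_mem_erase hj), Finset.sum_const,
    Finset.card_erase_of_mem (Finset.mem_univ i), Finset.card_univ, Fintype.card_fin,
    nsmul_eq_mul, Nat.cast_pred (Fin.pos i)]

theorem sum_sum_eq_of_diag_of_offDiag {d : ℕ} {f : Fin d → Fin d → ℝ} {p q : Fin d}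
    (hdiag : ∀ x, f x x = f p p) (hoff : ∀ x y, x ≠ y → f x y = f p q) :
    ∑ x, ∑ y, f x y = d * (f p p + ((d : ℝ) - 1) * f p q) := by
  simp [sum_eq_add_mul_of_forall_ne _ fun y hy => hoff _ y (Ne.symm hy), hdiag, mul_add]

theorem Equiv.Perm.exists_apply_eq_apply_eq {α : Type*} {p q x y : α}
    (hpq : p ≠ q) (hxy : x ≠ y) : ∃ σ : Equiv.Perm α, σ p = x ∧ σ q = y := by
  obtain ⟨σ, hσ⟩ := Equiv.Perm.exists_extending_pair ![p, q] ![x, y]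
    (by simp [Function.Injective, Fin.forall_fin_two, hpq, hpq.symm])
    (by simp [Function.Injective, Fin.forall_fin_two, hxy, hxy.symm])
  exact ⟨σ, hσ 0, hσ 1⟩

namespace Matrix

theorem mul_single_one_mul_apply {n α : Type*} [Fintype n] [DecidableEq n] [NonAssocSemiring α]
    (A : Matrix n n α) (i j k : n) : (A * single i i (1 : α) * A) j k = A j i * A i k := by
  rw [mul_apply, Finset.sum_eq_single i (fun b _ hb => by simp [hb]) (by simp)]
  simp

variable {d : ℕ} {p q : Fin d}

/-- The rotation of the `(p, q)`-plane sending `e_p` to `c e_p + s e_q`. -/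
def givens (p q : Fin d) (c s : ℝ) : Matrix (Fin d) (Fin d) ℝ :=
  1 + (c - 1) • (single p p 1 + single q q 1) + s • (single q p 1 - single p q 1)

theorem givens_transpose_mul_self (hpq : p ≠ q) {c s : ℝ} (hcs : c ^ 2 + s ^ 2 = 1) :
    (givens p q c s)ᵀ * givens p q c s = 1 := by
  obtain ⟨D, hD⟩ : ∃ D : Matrix (Fin d) (Fin d) ℝ, D = single p p 1 + single q q 1 := ⟨_, rfl⟩
  obtain ⟨A, hA⟩ : ∃ A : Matrix (Fin d) (Fin d) ℝ, A = single q p 1 - single p q 1 := ⟨_, rfl⟩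
  have hDD : D * D = D := by simp [hD, mul_add, add_mul, hpq, hpq.symm]
  have hDA : D * A = A := by simp [hD, hA, mul_sub, add_mul, hpq, hpq.symm]
  have hAD : A * D = A := by
    simp [hD, hA, sub_mul, mul_add, hpq, hpq.symm]
    abel
  have hAA : A * A = -D := by
    simp [hD, hA, sub_mul, mul_sub, hpq, hpq.symm]
    abel
  have hDt : Dᵀ = D := by simp [hD]
  have hAt : Aᵀ = -A := by simp [hA]
  rw [givens, ← hD, ← hA]
  calc (1 + (c - 1) • D + s • A)ᵀ * (1 + (c - 1) • D + s • A)
      = 1 + (c ^ 2 + s ^ 2 - 1) • D := by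
        simp only [transpose_add, transpose_smul, transpose_one, hDt, hAt, add_mul, mul_add,
          one_mul, mul_one, smul_mul_assoc, mul_smul_comm, hDD, hDA, hAD, hAA, smul_neg, neg_mul]
        module
    _ = 1 := by rw [hcs, sub_self, zero_smul, add_zero]

theorem givens_apply_left (hpq : p ≠ q) (c s : ℝ) (a : Fin d) :
    givens p q c s a p = (if a = p then c else 0) + (if a = q then s else 0) := by
  by_cases hap : a = p
  · simp [givens, hap, hpq, hpq.symm]
  · by_cases haq : a = q
    · simp [givens, haq, hpq, hpq.symm]
    · simp [givens, hap, haq, Ne.symm hap, Ne.symm haq]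

theorem transpose_givens_mul_mul_givens_apply (hpq : p ≠ q) (c s : ℝ)
    (M : Matrix (Fin d) (Fin d) ℝ) :
    ((givens p q c s)ᵀ * M * givens p q c s) p p =
      c ^ 2 * M p p + c * s * (M p q + M q p) + s ^ 2 * M q q := by
  simp only [mul_apply, transpose_apply, givens_apply_left hpq]
  simp [add_mul, mul_add, Finset.sum_add_distrib, ite_mul, mul_ite]
  ring

end Matrix

namespace IsOrthProj

variable {d k : ℕ} {P : Matrix (Fin d) (Fin d) ℝ}

theorem apply_symm (h : IsOrthProj P k) (a b : Fin d) : P b a = P a b := by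
  rw [← transpose_apply P a b, h.1]

theorem sum_diag (h : IsOrthProj P k) : ∑ a, P a a = k := h.2.2

theorem sum_mul_self_apply (h : IsOrthProj P k) (a : Fin d) : ∑ b, P a b * P a b = P a a := by
  conv_rhs => rw [← h.2.1, mul_apply]
  exact Finset.sum_congr rfl fun b _ => by rw [h.apply_symm a b]

theorem abs_apply_le_one_s7 (h : IsOrthProj P k) (a b : Fin d) : |P a b| ≤ 1 := by
  have hle : ∀ b, P a b * P a b ≤ P a a := fun b => by
    rw [← h.sum_mul_self_apply a]
    exact Finset.single_le_sum (fun b _ => mul_self_nonneg (P a b)) (Finset.mem_univ b)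
  have hdiag : P a a ≤ 1 := by nlinarith [hle a, mul_self_nonneg (P a a)]
  exact abs_le_one_iff_mul_self_le_one.mpr ((hle b).trans hdiag)

end IsOrthProj

theorem isOrthProj_mul_transpose {d T : ℕ} {V : Matrix (Fin d) (Fin T) ℝ} (hV : Vᵀ * V = 1) :
    IsOrthProj (V * Vᵀ) T :=
  ⟨by rw [transpose_mul, transpose_transpose],
   by rw [Matrix.mul_assoc, ← Matrix.mul_assoc Vᵀ, hV, Matrix.one_mul],
   by rw [trace_mul_comm, hV, trace_one, Fintype.card_fin]⟩

theorem UniformOnStiefel.uniformOnGrassmannian {Ω : Type*} [MeasurableSpace Ω] {μ : Measure Ω}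
    {d T : ℕ} {V : Ω → Matrix (Fin d) (Fin T) ℝ} (hVm : Measurable V)
    (hV : UniformOnStiefel μ V) : UniformOnGrassmannian μ (fun ω => V ω * (V ω)ᵀ) T := by
  refine ⟨hV.1.mono fun ω => isOrthProj_mul_transpose, fun Q hQ => ?_⟩
  have hgram : Measurable fun W : Matrix (Fin d) (Fin T) ℝ => W * Wᵀ :=
    (by fun_prop : Continuous fun W : Matrix (Fin d) (Fin T) ℝ => W * Wᵀ).measurable
  have hQt : (Qᵀ)ᵀ * Qᵀ = 1 := by rw [transpose_transpose, mul_eq_one_comm.mp hQ]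
  have hQtV : Measurable fun ω => Qᵀ * V ω :=
    (by fun_prop : Continuous fun W : Matrix (Fin d) (Fin T) ℝ => Qᵀ * W).measurable.comp hVm
  calc Measure.map (fun ω => Qᵀ * (V ω * (V ω)ᵀ) * Q) μ
      = (Measure.map (fun ω => Qᵀ * V ω) μ).map fun W => W * Wᵀ := by
        rw [Measure.map_map hgram hQtV]
        congr 1
        ext1 ω
        simp [Matrix.mul_assoc, transpose_mul]
    _ = Measure.map (fun ω => V ω * (V ω)ᵀ) μ := by
        rw [hV.2 _ hQt, Measure.map_map hgram hVm]
        rfl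

namespace UniformOnGrassmannian

variable {Ω : Type*} [MeasurableSpace Ω] {μ : Measure Ω} {d k : ℕ}
  {P : Ω → Matrix (Fin d) (Fin d) ℝ}

theorem apply_symm_ae (hP : UniformOnGrassmannian μ P k) (a b : Fin d) :
    ∀ᵐ ω ∂μ, P ω b a = P ω a b :=
  hP.1.mono fun _ hω => hω.apply_symm a b

theorem integrable_apply_mul_apply [IsFiniteMeasure μ] (hPm : Measurable P)
    (hP : UniformOnGrassmannian μ P k) (a b c e : Fin d) :
    Integrable (fun ω => P ω a b * P ω c e) μ := by
  refine Integrable.of_bound (C := 1) (by fun_prop) ?_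
  filter_upwards [hP.1] with ω hω
  rw [Real.norm_eq_abs, abs_mul]
  exact mul_le_one₀ (hω.abs_apply_le_one_s7 a b) (abs_nonneg _) (hω.abs_apply_le_one_s7 c e)

theorem integral_comp_conj (hPm : Measurable P) (hP : UniformOnGrassmannian μ P k)
    {f : Matrix (Fin d) (Fin d) ℝ → ℝ} (hf : Measurable f) {Q : Matrix (Fin d) (Fin d) ℝ}
    (hQ : Qᵀ * Q = 1) : ∫ ω, f (Qᵀ * P ω * Q) ∂μ = ∫ ω, f (P ω) ∂μ := by
  have hconj : Measurable fun ω => Qᵀ * P ω * Q :=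
    (by fun_prop : Continuous fun M : Matrix (Fin d) (Fin d) ℝ => Qᵀ * M * Q).measurable.comp hPm
  rw [← integral_map hconj.aemeasurable hf.aestronglyMeasurable, hP.2 Q hQ,
    integral_map hPm.aemeasurable hf.aestronglyMeasurable]

theorem integral_conj_apply_mul_apply (hPm : Measurable P) (hP : UniformOnGrassmannian μ P k)
    {Q : Matrix (Fin d) (Fin d) ℝ} (hQ : Qᵀ * Q = 1) (a b c e : Fin d) :
    ∫ ω, (Qᵀ * P ω * Q) a b * (Qᵀ * P ω * Q) c e ∂μ = ∫ ω, P ω a b * P ω c e ∂μ :=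
  hP.integral_comp_conj hPm (f := fun M => M a b * M c e) (by fun_prop) hQ

theorem integral_apply_mul_apply_perm (hPm : Measurable P) (hP : UniformOnGrassmannian μ P k)
    (σ : Equiv.Perm (Fin d)) (a b c e : Fin d) :
    ∫ ω, P ω (σ a) (σ b) * P ω (σ c) (σ e) ∂μ = ∫ ω, P ω a b * P ω c e ∂μ := by
  have hQ : (σ⁻¹.permMatrix ℝ)ᵀ * σ⁻¹.permMatrix ℝ = 1 := by simp [← permMatrix_mul]
  simpa [PEquiv.toMatrix_toPEquiv_mul, PEquiv.mul_toMatrix_toPEquiv, Equiv.Perm.inv_def] using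
    hP.integral_conj_apply_mul_apply hPm hQ a b c e

theorem integral_apply_mul_apply_eq_zero (hPm : Measurable P) (hP : UniformOnGrassmannian μ P k)
    (r : Fin d) {a b c e : Fin d}
    (hodd : ((if a = r then -1 else 1) * (if b = r then -1 else 1) *
      (if c = r then -1 else 1) * (if e = r then -1 else 1) : ℝ) = -1) :
    ∫ ω, P ω a b * P ω c e ∂μ = 0 := by
  set ε : Fin d → ℝ := fun x => if x = r then -1 else 1
  have hQ : (diagonal ε)ᵀ * diagonal ε = 1 := by
    rw [diagonal_transpose, diagonal_mul_diagonal, ← diagonal_one]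
    congr 1
    ext x
    by_cases hx : x = r <;> simp [ε, hx]
  have h := hP.integral_conj_apply_mul_apply hPm hQ a b c e
  simp only [diagonal_transpose, diagonal_mul, mul_diagonal] at h
  have hflip : ∀ ω, ε a * P ω a b * ε b * (ε c * P ω c e * ε e) = -(P ω a b * P ω c e) := by
    intro ω
    linear_combination (P ω a b * P ω c e) * hodd
  simp only [hflip, integral_neg] at h
  linarith

theorem integral_apply_mul_apply_of_ne (hPm : Measurable P) (hP : UniformOnGrassmannian μ P k)
    {i j l : Fin d} (hjl : j ≠ l) : ∫ ω, P ω j i * P ω i l ∂μ = 0 := by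
  rcases eq_or_ne j i with rfl | hji
  · exact hP.integral_apply_mul_apply_eq_zero hPm l (by simp [hjl])
  · exact hP.integral_apply_mul_apply_eq_zero hPm j (by simp [hji.symm, hjl.symm])

theorem integral_mul_self_apply_eq_of_ne (hPm : Measurable P) (hP : UniformOnGrassmannian μ P k)
    {p q x y : Fin d} (hpq : p ≠ q) (hxy : x ≠ y) :
    ∫ ω, P ω x y * P ω x y ∂μ = ∫ ω, P ω p q * P ω p q ∂μ := by
  obtain ⟨σ, rfl, rfl⟩ := Equiv.Perm.exists_apply_eq_apply_eq hpq hxy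
  exact hP.integral_apply_mul_apply_perm hPm σ p q p q

theorem integral_diag_mul_diag_eq_of_ne (hPm : Measurable P) (hP : UniformOnGrassmannian μ P k)
    {p q x y : Fin d} (hpq : p ≠ q) (hxy : x ≠ y) :
    ∫ ω, P ω x x * P ω y y ∂μ = ∫ ω, P ω p p * P ω q q ∂μ := by
  obtain ⟨σ, rfl, rfl⟩ := Equiv.Perm.exists_apply_eq_apply_eq hpq hxy
  exact hP.integral_apply_mul_apply_perm hPm σ p p q q

theorem integral_mul_self_diag_eq (hPm : Measurable P) (hP : UniformOnGrassmannian μ P k)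
    (p x : Fin d) : ∫ ω, P ω x x * P ω x x ∂μ = ∫ ω, P ω p p * P ω p p ∂μ := by
  simpa using hP.integral_apply_mul_apply_perm hPm (Equiv.swap p x) p p p p

theorem integral_mul_self_diag_eq_two_mul_add [IsFiniteMeasure μ] (hPm : Measurable P)
    (hP : UniformOnGrassmannian μ P k) {p q : Fin d} (hpq : p ≠ q) :
    ∫ ω, P ω p p * P ω p p ∂μ = 2 * ∫ ω, P ω p q * P ω p q ∂μ + ∫ ω, P ω p p * P ω q q ∂μ := by
  have hint := hP.integrable_apply_mul_apply hPm
  -- A rotation with rational entries: `(GᵀPG)_pp = (9 P_pp + 24 P_pq + 16 P_qq) / 25`.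
  set G := givens p q (3 / 5) (4 / 5) with hG
  have hrot := hP.integral_conj_apply_mul_apply hPm
    (givens_transpose_mul_self hpq (c := 3 / 5) (s := 4 / 5) (by norm_num)) p p p p
  have hexp : ∀ᵐ ω ∂μ, (Gᵀ * P ω * G) p p * (Gᵀ * P ω * G) p p =
      81 / 625 * (P ω p p * P ω p p) + 256 / 625 * (P ω q q * P ω q q) +
      576 / 625 * (P ω p q * P ω p q) + 288 / 625 * (P ω p p * P ω q q) +
      432 / 625 * (P ω p p * P ω p q) + 768 / 625 * (P ω p q * P ω q q) := by
    filter_upwards [hP.apply_symm_ae p q] with ω hω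
    rw [hG, transpose_givens_mul_mul_givens_apply hpq, hω]
    ring
  rw [integral_congr_ae hexp, integral_add (by fun_prop) (by fun_prop),
    integral_add (by fun_prop) (by fun_prop), integral_add (by fun_prop) (by fun_prop),
    integral_add (by fun_prop) (by fun_prop), integral_add (by fun_prop) (by fun_prop)] at hrot
  simp only [integral_const_mul] at hrot
  have hodd₁ : ∫ ω, P ω p p * P ω p q ∂μ = 0 :=
    hP.integral_apply_mul_apply_eq_zero hPm q (by simp [hpq])
  have hodd₂ : ∫ ω, P ω p q * P ω q q ∂μ = 0 :=
    hP.integral_apply_mul_apply_eq_zero hPm p (by simp [hpq.symm])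
  rw [hodd₁, hodd₂, hP.integral_mul_self_diag_eq hPm p q] at hrot
  linarith

variable [IsProbabilityMeasure μ]

theorem sum_sum_integral_mul_self_apply (hPm : Measurable P) (hP : UniformOnGrassmannian μ P k) :
    ∑ x, ∑ y, ∫ ω, P ω x y * P ω x y ∂μ = k := by
  have hint := hP.integrable_apply_mul_apply hPm
  simp_rw [← integral_finsetSum _ fun _ _ => hint _ _ _ _]
  rw [← integral_finsetSum _ fun _ _ => integrable_finsetSum _ fun _ _ => hint _ _ _ _,
    integral_congr_ae (g := fun _ => (k : ℝ)), integral_const, probReal_univ, one_smul]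
  filter_upwards [hP.1] with ω hω
  simp only [hω.sum_mul_self_apply, hω.sum_diag]

theorem sum_sum_integral_diag_mul_diag (hPm : Measurable P) (hP : UniformOnGrassmannian μ P k) :
    ∑ x, ∑ y, ∫ ω, P ω x x * P ω y y ∂μ = (k : ℝ) ^ 2 := by
  have hint := hP.integrable_apply_mul_apply hPm
  simp_rw [← integral_finsetSum _ fun _ _ => hint _ _ _ _]
  rw [← integral_finsetSum _ fun _ _ => integrable_finsetSum _ fun _ _ => hint _ _ _ _,
    integral_congr_ae (g := fun _ => (k : ℝ) ^ 2), integral_const, probReal_univ, one_smul]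
  filter_upwards [hP.1] with ω hω
  simp only [← Finset.sum_mul_sum, hω.sum_diag, sq]

theorem mul_integral_mul_self_diag_add (hPm : Measurable P) (hP : UniformOnGrassmannian μ P k)
    {p q : Fin d} (hpq : p ≠ q) :
    d * (∫ ω, P ω p p * P ω p p ∂μ + (d - 1) * ∫ ω, P ω p q * P ω p q ∂μ) = k := by
  rw [← hP.sum_sum_integral_mul_self_apply hPm,
    sum_sum_eq_of_diag_of_offDiag (f := fun x y => ∫ ω, P ω x y * P ω x y ∂μ)
      (hP.integral_mul_self_diag_eq hPm p)
      fun x y hxy => hP.integral_mul_self_apply_eq_of_ne hPm hpq hxy]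

theorem mul_integral_mul_self_diag_add_diag_mul_diag (hPm : Measurable P)
    (hP : UniformOnGrassmannian μ P k) {p q : Fin d} (hpq : p ≠ q) :
    d * (∫ ω, P ω p p * P ω p p ∂μ + (d - 1) * ∫ ω, P ω p p * P ω q q ∂μ) = (k : ℝ) ^ 2 := by
  rw [← hP.sum_sum_integral_diag_mul_diag hPm,
    sum_sum_eq_of_diag_of_offDiag (f := fun x y => ∫ ω, P ω x x * P ω y y ∂μ)
      (hP.integral_mul_self_diag_eq hPm p)
      fun x y hxy => hP.integral_diag_mul_diag_eq_of_ne hPm hpq hxy]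

theorem mul_integral_mul_self_apply_of_ne (hPm : Measurable P)
    (hP : UniformOnGrassmannian μ P k) {p q : Fin d} (hpq : p ≠ q) :
    (d - 1) * d * (d + 2) * ∫ ω, P ω p q * P ω p q ∂μ = k * (d - k) := by
  linear_combination d * hP.mul_integral_mul_self_diag_add hPm hpq -
    hP.mul_integral_mul_self_diag_add_diag_mul_diag hPm hpq -
    d * (d - 1) * hP.integral_mul_self_diag_eq_two_mul_add hPm hpq

theorem integral_mul_self_apply_of_ne (hPm : Measurable P) (hP : UniformOnGrassmannian μ P k)
    {p q : Fin d} (hpq : p ≠ q) :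
    ∫ ω, P ω p q * P ω p q ∂μ = k * (d - k) / ((d - 1) * d * (d + 2)) := by
  have hd : (2 : ℝ) ≤ d := by exact_mod_cast Fin.nontrivial_iff_two_le.mp ⟨⟨p, q, hpq⟩⟩
  have hd₁ : (0 : ℝ) < d - 1 := by linarith
  rw [eq_div_iff (by positivity), ← hP.mul_integral_mul_self_apply_of_ne hPm hpq]
  ring

theorem integral_mul_self_diag (hPm : Measurable P) (hP : UniformOnGrassmannian μ P k)
    {p q : Fin d} (hpq : p ≠ q) :
    ∫ ω, P ω p p * P ω p p ∂μ = k * (k + 2) / (d * (d + 2)) := by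
  have hd : (0 : ℝ) < d := Nat.cast_pos.mpr p.pos
  rw [eq_div_iff (by positivity)]
  linear_combination (d + 2) * hP.mul_integral_mul_self_diag_add hPm hpq -
    hP.mul_integral_mul_self_apply_of_ne hPm hpq

theorem integral_mul_single_mul_apply (hPm : Measurable P) (hP : UniformOnGrassmannian μ P k)
    (hd : 2 ≤ d) (i j l : Fin d) :
    ∫ ω, (P ω * single i i (1 : ℝ) * P ω) j l ∂μ =
      ((k ^ 2 * d + k * (d - 2)) / ((d - 1) * d * (d + 2))) * single i i (1 : ℝ) j l
        + (k * (d - k) / ((d - 1) * d * (d + 2))) * (if j = l then 1 else 0) := by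
  simp only [mul_single_one_mul_apply]
  rcases eq_or_ne j l with rfl | hjl
  · rcases eq_or_ne j i with rfl | hji
    · have : Nontrivial (Fin d) := Fin.nontrivial_iff_two_le.mpr hd
      obtain ⟨q, hq⟩ := exists_ne j
      have hd₁ : (d : ℝ) - 1 ≠ 0 := by
        have : (2 : ℝ) ≤ d := by exact_mod_cast hd
        linarith
      rw [hP.integral_mul_self_diag hPm hq.symm, single_apply_same, if_pos rfl]
      field_simp
      ring
    · rw [integral_congr_ae ((hP.apply_symm_ae i j).mono fun ω h => by rw [h]),
        hP.integral_mul_self_apply_of_ne hPm hji.symm,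
        single_apply_of_ne _ _ _ _ _ fun h => hji h.1.symm, if_pos rfl]
      ring
  · rw [hP.integral_apply_mul_apply_of_ne hPm hjl,
      single_apply_of_ne _ _ _ _ _ fun h => hjl (h.1.symm.trans h.2), if_neg hjl]
    ring

end UniformOnGrassmannian

theorem stmt_7_general {Ω : Type} [MeasurableSpace Ω] (μ : Measure Ω) [IsProbabilityMeasure μ]
    (T d : ℕ) (hd : 2 ≤ d)
    (V : Ω → Matrix (Fin d) (Fin T) ℝ) (hVm : Measurable V)
    (hV : UniformOnStiefel μ V)
    (i : Fin d) :
    (∀ j k, ∫ ω, ((V ω * (V ω)ᵀ) * Matrix.single i i (1 : ℝ) * (V ω * (V ω)ᵀ)) j k ∂μ =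
        (((T : ℝ) ^ 2 * d + T * ((d : ℝ) - 2)) / (((d : ℝ) - 1) * d * ((d : ℝ) + 2)))
            * Matrix.single i i (1 : ℝ) j k
          + (((T : ℝ) * ((d : ℝ) - T)) / (((d : ℝ) - 1) * d * ((d : ℝ) + 2)))
            * (if j = k then 1 else 0)) ∧
    (∫ ω, ((V ω * (V ω)ᵀ) * Matrix.single i i (1 : ℝ) * (V ω * (V ω)ᵀ)) i i ∂μ =
        (T : ℝ) * ((T : ℝ) + 2) / ((d : ℝ) * ((d : ℝ) + 2))) ∧
    (∀ j, j ≠ i →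
      ∫ ω, ((V ω * (V ω)ᵀ) * Matrix.single i i (1 : ℝ) * (V ω * (V ω)ᵀ)) j j ∂μ =
        (T : ℝ) * ((d : ℝ) - T) / (((d : ℝ) - 1) * d * ((d : ℝ) + 2))) ∧
    (∀ j k, j ≠ k →
      ∫ ω, ((V ω * (V ω)ᵀ) * Matrix.single i i (1 : ℝ) * (V ω * (V ω)ᵀ)) j k ∂μ = 0) := by
  have hPm : Measurable fun ω => V ω * (V ω)ᵀ :=
    (by fun_prop : Continuous fun W : Matrix (Fin d) (Fin T) ℝ => W * Wᵀ).measurable.comp hVm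
  have hP := hV.uniformOnGrassmannian hVm
  have hd₀ : (2 : ℝ) ≤ d := by exact_mod_cast hd
  have hd₁ : (d : ℝ) - 1 ≠ 0 := by linarith
  have hentry := hP.integral_mul_single_mul_apply hPm hd i
  beta_reduce at hentry
  refine ⟨hentry, ?_, fun j hji => ?_, fun j k hjk => ?_⟩
  · rw [hentry, single_apply_same, if_pos rfl]
    field_simp
    ring
  · rw [hentry, single_apply_of_ne _ _ _ _ _ fun h => hji h.1.symm, if_pos rfl]
    ring
  · rw [hentry, single_apply_of_ne _ _ _ _ _ fun h => hjk (h.1.symm.trans h.2), if_neg hjk]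
    ring

/-- Let `d ≥ 2`, `T ≤ d`, `V` uniform on the Stiefel manifold `St(T,d)` and
`P = VVᵀ`. For fixed `i`, with `E_ii = e_i e_iᵀ`,
`E[P E_ii P] = ((T²d + T(d−2))/((d−1)d(d+2)))·E_ii + (T(d−T)/((d−1)d(d+2)))·I_d`;
in particular `E[(P E_ii P)_{ii}] = T(T+2)/(d(d+2))`,
`E[(P E_ii P)_{jj}] = T(d−T)/((d−1)d(d+2))` for `j ≠ i`, and
`E[(P E_ii P)_{jk}] = 0` for `j ≠ k`. -/
theorem stmt_7 {Ω : Type} [MeasurableSpace Ω] (μ : Measure Ω) [IsProbabilityMeasure μ]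
    (T d : ℕ) (hd : 2 ≤ d) (hTd : T ≤ d)
    (V : Ω → Matrix (Fin d) (Fin T) ℝ) (hVm : Measurable V)
    (hV : UniformOnStiefel μ V)
    (i : Fin d) :
    (∀ j k, ∫ ω, ((V ω * (V ω)ᵀ) * Matrix.single i i (1 : ℝ) * (V ω * (V ω)ᵀ)) j k ∂μ =
        (((T : ℝ) ^ 2 * d + T * ((d : ℝ) - 2)) / (((d : ℝ) - 1) * d * ((d : ℝ) + 2)))
            * Matrix.single i i (1 : ℝ) j k
          + (((T : ℝ) * ((d : ℝ) - T)) / (((d : ℝ) - 1) * d * ((d : ℝ) + 2)))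
            * (if j = k then 1 else 0)) ∧
    (∫ ω, ((V ω * (V ω)ᵀ) * Matrix.single i i (1 : ℝ) * (V ω * (V ω)ᵀ)) i i ∂μ =
        (T : ℝ) * ((T : ℝ) + 2) / ((d : ℝ) * ((d : ℝ) + 2))) ∧
    (∀ j, j ≠ i →
      ∫ ω, ((V ω * (V ω)ᵀ) * Matrix.single i i (1 : ℝ) * (V ω * (V ω)ᵀ)) j j ∂μ =
        (T : ℝ) * ((d : ℝ) - T) / (((d : ℝ) - 1) * d * ((d : ℝ) + 2))) ∧
    (∀ j k, j ≠ k →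
      ∫ ω, ((V ω * (V ω)ᵀ) * Matrix.single i i (1 : ℝ) * (V ω * (V ω)ᵀ)) j k ∂μ = 0) :=
  stmt_7_general μ T d hd V hVm hV i
end
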